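/- arXiv:1708.01385 — 3 statements merged into one kernel-verified Lean document; each statement's English description precedes it below -/
import Mathlib

section
/- Let R be a commutative Noetherian ring and I an ideal of an R-algebra A which is a finitely generated A-module, such that A/I and I/I² are finitely generated R-modules that become zero after tensoring with the fraction field K of the domain R. Then there is a nonzero s ∈ R such that after localizing at s one has I² = I. -/
open TensorProduct

lemma aux_torsion_of_subsingleton_tensor {R : Type u} [CommRing R] [IsDomain R]
    {M : Type u} [AddCommGroup M] [Module R M]
    (h : Subsingleton (FractionRing R ⊗[R] M)) (m : M) :
    ∃ r : R, r ≠ 0 ∧ r • m = 0 := by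
  have hb : IsBaseChange (FractionRing R)
      (LocalizedModule.mkLinearMap (nonZeroDivisors R) M) :=
    IsLocalizedModule.isBaseChange (nonZeroDivisors R) (FractionRing R) _
  have : Subsingleton (LocalizedModule (nonZeroDivisors R) M) :=
    hb.equiv.symm.toEquiv.subsingleton
  obtain ⟨r, hr, hrm⟩ := (LocalizedModule.subsingleton_iff.mp this) m
  exact ⟨r, nonZeroDivisors.ne_zero hr, hrm⟩

/-- `R` a Noetherian domain with fraction field `K`, `A` an `R`-algebra and `I`
a two-sided ideal of `A`, finitely generated as a left `A`-module, such that `A/I` and `I/I²`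
are finitely generated `R`-modules vanishing after base change to `K`.  Then there is a
nonzero `s ∈ R` such that `I² = I` after localizing at `s` (i.e. a power of `s` moves any
element of `I` into `I²`). -/
theorem ideal_idempotent_after_localization
    (R : Type u) [CommRing R] [IsDomain R] [IsNoetherianRing R]
    (A : Type u) [Ring A] [Algebra R A]
    (I : Submodule R A)
    (htwosided : ∀ a : A, ∀ x ∈ I, a * x ∈ I ∧ x * a ∈ I)
    (hIfg : ∃ T : Finset A, I = (⊤ : Submodule R A) * Submodule.span R (T : Set A))
    [Module.Finite R (A ⧸ I)]
    (hAIK : Subsingleton (FractionRing R ⊗[R] (A ⧸ I)))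
    [Module.Finite R (I ⧸ (Submodule.comap I.subtype (I * I)))]
    (hIIK : Subsingleton (FractionRing R ⊗[R] (I ⧸ (Submodule.comap I.subtype (I * I))))) :
    ∃ s : R, s ≠ 0 ∧ ∀ x ∈ I, ∃ n : ℕ, s ^ n • x ∈ I * I := by
  classical
  set M := I ⧸ (Submodule.comap I.subtype (I * I)) with hM
  obtain ⟨S, hS⟩ := Module.Finite.fg_top (R := R) (M := M)
  choose r hr hrm using fun m : M => aux_torsion_of_subsingleton_tensor hIIK m
  refine ⟨∏ m ∈ S, r m, Finset.prod_ne_zero_iff.mpr fun m _ => hr m, ?_⟩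
  have hkill : ∀ m : M, (∏ m ∈ S, r m) • m = 0 := by
    intro m
    have hm : m ∈ Submodule.span R (S : Set M) := by rw [hS]; trivial
    have : Submodule.span R (S : Set M) ≤ Submodule.torsionBy R M (∏ m ∈ S, r m) := by
      rw [Submodule.span_le]
      intro x hx
      rw [SetLike.mem_coe, Submodule.mem_torsionBy_iff, ← Finset.prod_erase_mul S r hx, mul_smul, hrm x,
        smul_zero]
    simpa using this hm
  intro x hx
  refine ⟨1, ?_⟩
  have := hkill (Submodule.Quotient.mk ⟨x, hx⟩)
  rw [← Submodule.Quotient.mk_smul, Submodule.Quotient.mk_eq_zero] at this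
  simpa [pow_one] using this
end

section
/- Let A be an abelian category in which every object has finite length, and let φ be an additive function from the Grothendieck group K₀(A) to the ring of real polynomials such that for every nonzero object M, the polynomial φ([M]) is strictly positive on an interval (0, r) with r > 0 fixed. Then for each natural number d, the full subcategory A_{≥d} of objects M such that φ([M]) vanishes to order at least d at 0 (together with the zero object) is a Serre subcategory of A. -/
open CategoryTheory CategoryTheory.Limits Polynomial Set Filter

/-- A polynomial positive on `(0,r)` factors as `X^m * c` with `c.eval 0 > 0`. -/
lemma factor_pos (r : ℝ) (hr : 0 < r) (p : ℝ[X])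
    (hp : ∀ x ∈ Set.Ioo (0 : ℝ) r, 0 < p.eval x) :
    ∃ m c, p = X ^ m * c ∧ 0 < c.eval 0 := by
  have hp0 : p ≠ 0 := by
    intro h
    have := hp (r/2) ⟨by linarith, by linarith⟩
    simp [h] at this
  set m := p.rootMultiplicity 0 with hm
  have hdvd : (X : ℝ[X]) ^ m ∣ p := by
    simpa using p.pow_rootMultiplicity_dvd 0
  obtain ⟨c, hc⟩ := hdvd
  refine ⟨m, c, hc, ?_⟩
  have hcx : ∀ x ∈ Set.Ioo (0 : ℝ) r, 0 < c.eval x := by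
    intro x hx
    have h1 := hp x hx
    rw [hc, eval_mul, eval_pow, eval_X] at h1
    have hxm : (0:ℝ) < x ^ m := pow_pos hx.1 m
    nlinarith
  have hne : c.eval 0 ≠ 0 := by
    intro h0
    have hXc : (X : ℝ[X]) ∣ c := by
      simpa using dvd_iff_isRoot.mpr (show c.IsRoot 0 from h0)
    have : (X : ℝ[X]) ^ (m + 1) ∣ p := by
      rw [hc, pow_succ]
      exact mul_dvd_mul dvd_rfl hXc
    have := (le_rootMultiplicity_iff hp0 (a := 0)).mpr (by simpa using this)
    omega
  have hge : 0 ≤ c.eval 0 := by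
    have htend : Tendsto (fun x => c.eval x) (nhdsWithin 0 (Set.Ioi 0)) (nhds (c.eval 0)) :=
      (Polynomial.continuous c).continuousAt.continuousWithinAt.tendsto
    refine ge_of_tendsto htend ?_
    filter_upwards [Ioo_mem_nhdsGT_of_mem (by simp [hr] : (0:ℝ) ∈ Set.Ico 0 r)] with x hx
    exact (hcx x hx).le
  exact lt_of_le_of_ne hge (Ne.symm hne)

lemma key_dvd (r : ℝ) (hr : 0 < r) (p q : ℝ[X])
    (hp : p = 0 ∨ ∀ x ∈ Set.Ioo (0 : ℝ) r, 0 < p.eval x)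
    (hq : q = 0 ∨ ∀ x ∈ Set.Ioo (0 : ℝ) r, 0 < q.eval x)
    (d : ℕ) (h : (X : ℝ[X]) ^ d ∣ p + q) : (X : ℝ[X]) ^ d ∣ p ∧ (X : ℝ[X]) ^ d ∣ q := by
  rcases hp with hp | hp
  · subst hp; simpa using h
  rcases hq with hq | hq
  · subst hq; simpa using h
  obtain ⟨m₁, a, ha, ha0⟩ := factor_pos r hr p hp
  obtain ⟨m₃, b, hb, hb0⟩ := factor_pos r hr q hq
  -- wlog m₁ ≤ m₃
  suffices H : ∀ (p q : ℝ[X]) (m₁ m₃ : ℕ) (a b : ℝ[X]),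
      p = X ^ m₁ * a → 0 < a.eval 0 → q = X ^ m₃ * b → 0 < b.eval 0 → m₁ ≤ m₃ →
      (X : ℝ[X]) ^ d ∣ p + q → d ≤ m₁ by
    rcases le_total m₁ m₃ with hle | hle
    · have hd := H p q m₁ m₃ a b ha ha0 hb hb0 hle h
      constructor
      · exact dvd_trans (pow_dvd_pow _ hd) ⟨a, ha⟩
      · exact dvd_trans (pow_dvd_pow _ (hd.trans hle)) ⟨b, hb⟩
    · have hd := H q p m₃ m₁ b a hb hb0 ha ha0 hle (by rwa [add_comm])
      constructor
      · exact dvd_trans (pow_dvd_pow _ (hd.trans hle)) ⟨a, ha⟩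
      · exact dvd_trans (pow_dvd_pow _ hd) ⟨b, hb⟩
  clear ha ha0 hb hb0 h hp hq p q m₁ m₃ a b
  intro p q m₁ m₃ a b ha ha0 hb hb0 hle h
  set c : ℝ[X] := a + X ^ (m₃ - m₁) * b with hcdef
  have hsum : p + q = X ^ m₁ * c := by
    rw [ha, hb, hcdef, mul_add, ← mul_assoc, ← pow_add, Nat.add_sub_cancel' hle]
  have hc0 : 0 < c.eval 0 := by
    rw [hcdef]
    simp only [eval_add, eval_mul, eval_pow, eval_X]
    rcases Nat.eq_zero_or_pos (m₃ - m₁) with h0 | h0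
    · rw [h0]; simp; nlinarith
    · rw [zero_pow (by omega)]; simpa using ha0
  have hsne : p + q ≠ 0 := by
    intro h0
    rw [hsum] at h0
    rcases mul_eq_zero.mp h0 with h1 | h1
    · exact pow_ne_zero _ X_ne_zero h1
    · simp [h1] at hc0
  have hdle : d ≤ (p + q).rootMultiplicity 0 :=
    (le_rootMultiplicity_iff hsne (a := 0)).mpr (by simpa using h)
  have hmul : (p + q).rootMultiplicity 0 = m₁ := by
    rw [hsum, rootMultiplicity_mul (by rw [← hsum]; exact hsne)]
    have h1 : rootMultiplicity (0:ℝ) (X ^ m₁) = m₁ := by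
      have : ((X : ℝ[X]) - C 0) ^ m₁ = X ^ m₁ := by simp
      rw [← this, rootMultiplicity_X_sub_C_pow]
    have h2 : rootMultiplicity (0:ℝ) c = 0 :=
      rootMultiplicity_eq_zero (by simp [IsRoot]; exact hc0.ne')
    omega
  omega

lemma phi_zero_of_isZero {C : Type u} [Category.{v} C] [Abelian C]
    (φ : C → Polynomial ℝ)
    (hadd : ∀ S : ShortComplex C, S.ShortExact → φ S.X₂ = φ S.X₁ + φ S.X₃)
    {Z : C} (hZ : IsZero Z) : φ Z = 0 := by
  have hepi : Epi (0 : Z ⟶ Z) := by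
    have : (0 : Z ⟶ Z) = 𝟙 Z := hZ.eq_of_src _ _
    rw [this]; infer_instance
  let S : ShortComplex C := ShortComplex.mk (𝟙 Z) (0 : Z ⟶ Z) (by simp)
  have hse : S.ShortExact :=
    { exact := ShortComplex.exact_of_isZero_X₂ _ hZ
      mono_f := by dsimp [S]; infer_instance
      epi_g := hepi }
  have h := hadd S hse
  simp only [S] at h
  exact left_eq_add.mp h

/-- The vanishing-order condition is just divisibility by `X ^ d`. -/
lemma cond_iff_dvd (p : ℝ[X]) (d : ℕ) :
    (p = 0 ∨ d ≤ p.rootMultiplicity 0) ↔ (X : ℝ[X]) ^ d ∣ p := by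
  rcases eq_or_ne p 0 with h | h
  · simp [h]
  · rw [le_rootMultiplicity_iff h]
    simp [h]

/-- let `A` be an abelian category all of whose objects have finite length and
`φ` an additive assignment of a real polynomial to each object (i.e. a homomorphism out of
`K₀(A)`) such that `φ(M)` is strictly positive on `(0, r)` for every nonzero `M`.  Then for
each `d`, the objects whose polynomial vanishes to order at least `d` at `0` (together with
the zero objects) form a Serre subcategory: in any short exact sequence the middle term
belongs to the subcategory iff both outer terms do. -/
theorem order_of_vanishing_filtration_is_serre
    {C : Type u} [Category.{v} C] [Abelian C]
    (hfl : ∀ X : C, Order.krullDim (Subobject X) < ⊤)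
    (φ : C → Polynomial ℝ)
    (hadd : ∀ S : ShortComplex C, S.ShortExact → φ S.X₂ = φ S.X₁ + φ S.X₃)
    (r : ℝ) (hr : 0 < r)
    (hpos : ∀ M : C, ¬ IsZero M → ∀ x ∈ Set.Ioo (0 : ℝ) r, 0 < (φ M).eval x)
    (d : ℕ) :
    ∀ S : ShortComplex C, S.ShortExact →
      ((φ S.X₂ = 0 ∨ d ≤ (φ S.X₂).rootMultiplicity 0) ↔
        ((φ S.X₁ = 0 ∨ d ≤ (φ S.X₁).rootMultiplicity 0) ∧
         (φ S.X₃ = 0 ∨ d ≤ (φ S.X₃).rootMultiplicity 0))) := by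
  intro S hS
  have hp := fun M => (em (IsZero M)).imp (fun h => phi_zero_of_isZero φ hadd h)
    (fun h => hpos M h)
  rw [cond_iff_dvd, cond_iff_dvd, cond_iff_dvd, hadd S hS]
  constructor
  · exact key_dvd r hr _ _ (hp S.X₁) (hp S.X₃) d
  · rintro ⟨h1, h3⟩
    exact dvd_add h1 h3
end

section
/- Let B(t) be a symmetric bilinear form on a free module of finite rank n over k[t] (k a field) whose specialization at generic t is nondegenerate. Define the Jantzen filtration F^j of the specialization V = V(0) by: F^0 V = V, and F^j V = { v(0) : v ∈ V(k[t]), B(t)(v, w) ∈ t^j k[t] for all w ∈ V(k[t]) }. Then the order of vanishing at t = 0 of det B(t) equals Σ_{j ≥ 1} dim_k F^j V. -/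
/-!
Over the principal ideal domain `k[t]` the Smith normal form writes `B = P * diag(a) * Q` with
`P`, `Q` invertible. Right multiplication by `Q` preserves each lattice `t^j k[t]^n`, and right
multiplication by `P` is a bijection of `k[t]^n` whose reduction mod `t` is again invertible, so
`F^j` has the dimension of the reduction of `{u | a_i u_i ∈ t^j k[t] for all i}`, which is
`#{i | j ≤ ord a_i}`. Summing over `j ≥ 1` gives `Σ_i ord a_i = ord det B`.
-/

open Polynomial

universe u

/-- Reduction mod `t`: the specialization at `t = 0` of a vector of polynomials. -/
noncomputable def evalZeroMap (k : Type u) [Field k] (n : ℕ) :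
    (Fin n → Polynomial k) →ₗ[k] (Fin n → k) :=
  LinearMap.pi fun j => (Polynomial.lcoeff k 0).comp (LinearMap.proj j)

/-- The pairing `v ↦ B(t)(v, w) = Σ_{i,l} v_i B_{il} w_l` with a fixed vector `w`. -/
noncomputable def pairingMap (k : Type u) [Field k] (n : ℕ)
    (B : Matrix (Fin n) (Fin n) (Polynomial k)) (w : Fin n → Polynomial k) :
    (Fin n → Polynomial k) →ₗ[k] Polynomial k where
  toFun v := ∑ i, ∑ l, v i * B i l * w l
  map_add' v v' := by
    simp [add_mul, Finset.sum_add_distrib]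
  map_smul' c v := by
    simp [Finset.smul_sum, smul_mul_assoc]

/-- The `j`-th term of the Jantzen filtration of the specialization at `t = 0`:
reductions of lattice vectors pairing into `t^j k[t]` with the whole lattice. -/
noncomputable def jantzenFiltration (k : Type u) [Field k] (n : ℕ)
    (B : Matrix (Fin n) (Fin n) (Polynomial k)) (j : ℕ) : Submodule k (Fin n → k) :=
  Submodule.map (evalZeroMap k n)
    (⨅ w : Fin n → Polynomial k,
      Submodule.comap (pairingMap k n B w)
        ((Ideal.span {(X : Polynomial k) ^ j}).restrictScalars k))

namespace Matrix

variable {ι R : Type*} [CommRing R]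

theorem exists_eq_mul_diagonal_mul_of_det_ne_zero [Fintype ι] [DecidableEq ι] [IsDomain R]
    [IsPrincipalIdealRing R] (A : Matrix ι ι R) (hA : A.det ≠ 0) :
    ∃ (P Q : Matrix ι ι R) (a : ι → R),
      IsUnit P ∧ IsUnit Q ∧ (∀ i, a i ≠ 0) ∧ A = P * diagonal a * Q := by
  have hinj : Function.Injective A.mulVecLin := mulVec_injective_of_det_ne_zero hA
  obtain ⟨b, a, ab, hab⟩ := Submodule.exists_smith_normal_form_of_rank_eq
    (Pi.basisFun R ι) (LinearMap.finrank_range_of_inj hinj)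
  let c : (ι → R) ≃ₗ[R] (ι → R) := (LinearEquiv.ofInjective _ hinj).trans ab.equivFun
  have hfactor : A.mulVecLin = b.equivFun.symm.toLinearMap ∘ₗ (diagonal a).mulVecLin ∘ₗ c := by
    refine LinearMap.ext fun v => ?_
    have hv : A *ᵥ v = ∑ i, c v i • (ab i : ι → R) := by
      calc A *ᵥ v = (LinearEquiv.ofInjective _ hinj v : ι → R) := rfl
        _ = ((∑ i, c v i • ab i : LinearMap.range A.mulVecLin) : ι → R) :=
          congrArg Subtype.val (ab.sum_equivFun _).symm
        _ = ∑ i, c v i • (ab i : ι → R) := by simp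
    simp [hv, hab, mulVec_diagonal, Module.Basis.equivFun_symm_apply, smul_smul, mul_comm]
  refine ⟨LinearMap.toMatrix' b.equivFun.symm.toLinearMap, LinearMap.toMatrix' c.toLinearMap, a,
    ?_, ?_, fun i hi => ab.ne_zero i (Subtype.ext (by simp [hab, hi])), ?_⟩
  · rw [isUnit_iff_isUnit_det, LinearMap.det_toMatrix']
    exact b.equivFun.symm.isUnit_det'
  · rw [isUnit_iff_isUnit_det, LinearMap.det_toMatrix']
    exact c.isUnit_det'
  · rw [← LinearMap.toMatrix'_toLin' A, toLin'_apply', hfactor, LinearMap.toMatrix'_comp,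
      LinearMap.toMatrix'_comp, ← toLin'_apply', LinearMap.toMatrix'_toLin', mul_assoc]

theorem vecMul_mem_ideal {m : Type*} [Fintype m] {I : Ideal R} (M : Matrix m ι R) {v : m → R}
    (hv : ∀ i, v i ∈ I) (l : ι) : (v ᵥ* M) l ∈ I :=
  Ideal.sum_mem _ fun i _ => I.mul_mem_right _ (hv i)

theorem vecMul_mem_ideal_iff_of_isUnit [Fintype ι] [DecidableEq ι] {I : Ideal R}
    {M : Matrix ι ι R} (hM : IsUnit M) {v : ι → R} : (∀ l, (v ᵥ* M) l ∈ I) ↔ ∀ i, v i ∈ I := by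
  refine ⟨fun h => ?_, vecMul_mem_ideal M⟩
  have hv : v = (v ᵥ* M) ᵥ* M⁻¹ := by
    rw [vecMul_vecMul, mul_nonsing_inv M ((isUnit_iff_isUnit_det M).mp hM), vecMul_one]
  rw [hv]
  exact vecMul_mem_ideal _ h

end Matrix

namespace Polynomial

variable {R : Type*} [CommRing R] [IsDomain R]

theorem rootMultiplicity_eq_zero_of_isUnit {p : R[X]} (hp : IsUnit p) (x : R) :
    rootMultiplicity x p = 0 := by
  obtain ⟨r, -, rfl⟩ := isUnit_iff.mp hp
  exact rootMultiplicity_C r x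

theorem rootMultiplicity_prod {ι : Type*} (s : Finset ι) (f : ι → R[X])
    (hf : ∏ i ∈ s, f i ≠ 0) (x : R) :
    rootMultiplicity x (∏ i ∈ s, f i) = ∑ i ∈ s, rootMultiplicity x (f i) := by
  classical
  simp_rw [← count_roots, roots_prod f s hf, Multiset.count_bind]
  rfl

theorem rootMultiplicity_det_mul_diagonal_mul {ι : Type*} [Fintype ι] [DecidableEq ι]
    {P Q : Matrix ι ι R[X]} (hP : IsUnit P) (hQ : IsUnit Q) {a : ι → R[X]} (ha : ∀ i, a i ≠ 0)
    (x : R) :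
    rootMultiplicity x (P * Matrix.diagonal a * Q).det = ∑ i, rootMultiplicity x (a i) := by
  rw [Matrix.isUnit_iff_isUnit_det] at hP hQ
  have hprod : ∏ i, a i ≠ 0 := Finset.prod_ne_zero_iff.mpr fun i _ => ha i
  rw [Matrix.det_mul, Matrix.det_mul, Matrix.det_diagonal,
    rootMultiplicity_mul (mul_ne_zero (mul_ne_zero hP.ne_zero hprod) hQ.ne_zero),
    rootMultiplicity_mul (mul_ne_zero hP.ne_zero hprod), rootMultiplicity_prod _ _ hprod,
    rootMultiplicity_eq_zero_of_isUnit hP, rootMultiplicity_eq_zero_of_isUnit hQ, zero_add,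
    add_zero]

theorem mul_mem_span_X_pow_iff {a u : R[X]} (ha : a ≠ 0) (j : ℕ) :
    a * u ∈ Ideal.span {(X : R[X]) ^ j} ↔
      u ∈ Ideal.span {(X : R[X]) ^ (j - rootMultiplicity 0 a)} := by
  rcases eq_or_ne u 0 with rfl | hu
  · simp
  have hX : (X : R[X]) - C 0 = X := by simp
  rw [Ideal.mem_span_singleton, Ideal.mem_span_singleton, ← hX,
    ← le_rootMultiplicity_iff (mul_ne_zero ha hu), ← le_rootMultiplicity_iff hu,
    rootMultiplicity_mul (mul_ne_zero ha hu)]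
  omega

end Polynomial

open Matrix Finset

section JantzenFiltration

variable {k : Type u} [Field k] {n : ℕ}

variable (k) in
noncomputable def xPowLattice (e : Fin n → ℕ) : Submodule k (Fin n → k[X]) :=
  Submodule.pi Set.univ fun i => (Ideal.span {(X : k[X]) ^ e i}).restrictScalars k

@[simp]
theorem mem_xPowLattice {e : Fin n → ℕ} {v : Fin n → k[X]} :
    v ∈ xPowLattice k e ↔ ∀ i, v i ∈ Ideal.span {(X : k[X]) ^ e i} := by
  simp [xPowLattice]

theorem vecMul_mem_xPowLattice_const_iff {Q : Matrix (Fin n) (Fin n) k[X]} (hQ : IsUnit Q)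
    {v : Fin n → k[X]} {j : ℕ} :
    v ᵥ* Q ∈ xPowLattice k (fun _ => j) ↔ v ∈ xPowLattice k (fun _ => j) := by
  simpa only [mem_xPowLattice] using vecMul_mem_ideal_iff_of_isUnit hQ

theorem vecMul_diagonal_mem_xPowLattice_iff {a : Fin n → k[X]} (ha : ∀ i, a i ≠ 0)
    {v : Fin n → k[X]} {j : ℕ} :
    v ᵥ* diagonal a ∈ xPowLattice k (fun _ => j) ↔
      v ∈ xPowLattice k (fun i => j - rootMultiplicity 0 (a i)) := by
  simp only [mem_xPowLattice, vecMul_diagonal, mul_comm (v _),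
    mul_mem_span_X_pow_iff (ha _)]

theorem mem_iInf_comap_pairingMap_iff (B : Matrix (Fin n) (Fin n) k[X]) (j : ℕ)
    (v : Fin n → k[X]) :
    v ∈ ⨅ w, ((Ideal.span {(X : k[X]) ^ j}).restrictScalars k).comap (pairingMap k n B w) ↔
      v ᵥ* B ∈ xPowLattice k (fun _ => j) := by
  have hpairing : ∀ w, pairingMap k n B w v = v ᵥ* B ⬝ᵥ w := fun w => by
    simp only [pairingMap, LinearMap.coe_mk, AddHom.coe_mk, vecMul, dotProduct, sum_mul]
    exact sum_comm
  simp only [Submodule.mem_iInf, Submodule.mem_comap, Submodule.restrictScalars_mem, hpairing,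
    mem_xPowLattice]
  refine ⟨fun h l => by simpa using h (Pi.single l 1), fun h w => ?_⟩
  exact Ideal.sum_mem _ fun l _ => Ideal.mul_mem_right _ _ (h l)

theorem evalZeroMap_vecMul (M : Matrix (Fin n) (Fin n) k[X]) (v : Fin n → k[X]) :
    evalZeroMap k n (v ᵥ* M) = evalZeroMap k n v ᵥ* M.map constantCoeff :=
  funext (RingHom.map_vecMul constantCoeff M v)

theorem finrank_map_evalZeroMap_comap_vecMul {P : Matrix (Fin n) (Fin n) k[X]} (hP : IsUnit P)
    (T : Submodule k (Fin n → k[X])) :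
    Module.finrank k ((T.comap (P.vecMulLinear.restrictScalars k)).map (evalZeroMap k n)) =
      Module.finrank k (T.map (evalZeroMap k n)) := by
  have hP0 : IsUnit (P.map constantCoeff) := hP.map constantCoeff.mapMatrix
  have hsurj : Function.Surjective (P.vecMulLinear.restrictScalars k) :=
    vecMul_surjective_iff_isUnit.mpr hP
  have hcomm : evalZeroMap k n ∘ₗ P.vecMulLinear.restrictScalars k =
      (P.map constantCoeff).vecMulLinear ∘ₗ evalZeroMap k n :=
    LinearMap.ext fun v => evalZeroMap_vecMul P v
  rw [(Submodule.equivMapOfInjective (P.map constantCoeff).vecMulLinear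
      (vecMul_injective_iff_isUnit.mpr hP0) _).finrank_eq,
    ← Submodule.map_comp, ← hcomm, Submodule.map_comp, Submodule.map_comap_eq_of_surjective hsurj]

theorem map_evalZeroMap_xPowLattice (e : Fin n → ℕ) :
    (xPowLattice k e).map (evalZeroMap k n) =
      ⨅ i ∈ {i | e i ≠ 0}, LinearMap.ker (LinearMap.proj i) := by
  ext y
  simp only [Submodule.mem_map, mem_xPowLattice, Submodule.mem_iInf, LinearMap.mem_ker,
    LinearMap.proj_apply, Set.mem_ofPred_eq]
  constructor
  · rintro ⟨v, hv, rfl⟩ i hi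
    exact (X_pow_dvd_iff.mp (Ideal.mem_span_singleton.mp (hv i))) 0 (Nat.pos_of_ne_zero hi)
  · intro hy
    refine ⟨fun i => C (y i), fun i => ?_, funext fun i => coeff_C_zero⟩
    by_cases hi : e i = 0
    · simp [hi]
    · simp [hy i hi]

theorem finrank_map_evalZeroMap_xPowLattice (e : Fin n → ℕ) :
    Module.finrank k ((xPowLattice k e).map (evalZeroMap k n)) = #{i | e i = 0} := by
  rw [map_evalZeroMap_xPowLattice, (LinearMap.iInfKerProjEquiv k (fun _ => k)
    (I := {i | e i = 0}) (J := {i | e i ≠ 0}) ?_ ?_).finrank_eq]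
  · simp [Module.finrank_fintype_fun_eq_card, Fintype.card_subtype]
  · exact Set.disjoint_left.mpr fun i hi hi' => hi' hi
  · intro i _; by_cases hi : e i = 0 <;> simp [hi]

theorem finrank_jantzenFiltration {B P Q : Matrix (Fin n) (Fin n) k[X]} {a : Fin n → k[X]}
    (hP : IsUnit P) (hQ : IsUnit Q) (ha : ∀ i, a i ≠ 0) (hB : B = P * diagonal a * Q) (j : ℕ) :
    Module.finrank k (jantzenFiltration k n B j) = #{i | j ≤ rootMultiplicity 0 (a i)} := by
  have hlattice : (⨅ w, ((Ideal.span {(X : k[X]) ^ j}).restrictScalars k).comap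
      (pairingMap k n B w)) = (xPowLattice k fun i => j - rootMultiplicity 0 (a i)).comap
        (P.vecMulLinear.restrictScalars k) := by
    ext v
    rw [mem_iInf_comap_pairingMap_iff, hB, ← vecMul_vecMul, vecMul_mem_xPowLattice_const_iff hQ,
      ← vecMul_vecMul, vecMul_diagonal_mem_xPowLattice_iff ha]
    rfl
  rw [jantzenFiltration, hlattice, finrank_map_evalZeroMap_comap_vecMul hP,
    finrank_map_evalZeroMap_xPowLattice]
  simp_rw [Nat.sub_eq_zero_iff_le]

end JantzenFiltration

theorem ENat.tsum_card_filter_lt {ι : Type*} [Fintype ι] (m : ι → ℕ) :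
    ∑' j : ℕ, (#{i | j < m i} : ℕ∞) = ∑ i, m i := by
  have hle : ∀ i, m i ≤ ∑ i, m i := fun i => single_le_sum (fun _ _ => Nat.zero_le _) (mem_univ i)
  have hvanish : ∀ j ∉ range (∑ i, m i), (#{i | j < m i} : ℕ∞) = 0 := by
    intro j hj
    rw [mem_range, not_lt] at hj
    simpa using fun i => hj.trans' (hle i)
  rw [tsum_eq_sum hvanish]
  norm_cast
  calc ∑ j ∈ range (∑ i, m i), #{i | j < m i}
      = ∑ i, #{j ∈ range (∑ i, m i) | j < m i} := by simp_rw [card_filter]; exact sum_comm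
    _ = ∑ i, m i := sum_congr rfl fun i _ => by
      have hrange : {j ∈ range (∑ i, m i) | j < m i} = range (m i) := by
        ext j
        simp only [mem_filter, mem_range]
        have := hle i
        omega
      rw [hrange, card_range]

theorem jantzen_sum_formula_general (k : Type u) [Field k] (n : ℕ)
    (B : Matrix (Fin n) (Fin n) (Polynomial k)) (hdet : B.det ≠ 0) :
    ((B.det).rootMultiplicity 0 : ℕ∞) =
      ∑' j : ℕ, (Module.finrank k (jantzenFiltration k n B (j + 1)) : ℕ∞) := by
  obtain ⟨P, Q, a, hP, hQ, ha, hB⟩ := B.exists_eq_mul_diagonal_mul_of_det_ne_zero hdet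
  have hord : B.det.rootMultiplicity 0 = ∑ i, (a i).rootMultiplicity 0 :=
    hB ▸ rootMultiplicity_det_mul_diagonal_mul hP hQ ha 0
  simp_rw [finrank_jantzenFiltration hP hQ ha hB, Nat.add_one_le_iff, hord]
  exact (ENat.tsum_card_filter_lt _).symm

/-- Jantzen sum formula: for a symmetric bilinear form `B(t)` over `k[t]` on a
rank-`n` lattice with `det B(t) ≠ 0`, the order of vanishing of `det B(t)` at `t = 0` equals
`Σ_{j ≥ 1} dim_k F^j V` of the Jantzen filtration of the specialization at `t = 0`. -/
theorem jantzen_sum_formula (k : Type u) [Field k] (n : ℕ)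
    (B : Matrix (Fin n) (Fin n) (Polynomial k)) (hsymm : B.IsSymm) (hdet : B.det ≠ 0) :
    ((B.det).rootMultiplicity 0 : ℕ∞) =
      ∑' j : ℕ, (Module.finrank k (jantzenFiltration k n B (j + 1)) : ℕ∞) :=
  jantzen_sum_formula_general k n B hdet
end
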